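/- arXiv:2409.08336 — 4 statements merged into one kernel-verified Lean document; each statement's English description precedes it below -/
import Mathlib

section
/- Let T be the 4-cycle: the simplicial complex on vertex set {a,b,c,d} whose maximal simplices are {a,b}, {b,c}, {c,d}, {d,a}. Then the Davis complex Dav(T) ⊆ ℝ^4 is homeomorphic to the 2-dimensional torus S¹ × S¹. -/
/-!
The 4-cycle is the join of its two non-edges `{0, 2}` and `{1, 3}`: a set of vertices is a
simplex iff it contains neither pair. Hence a point `x` of the cube lies in `Dav(T)` iff
`(x 0, x 2)` and `(x 1, x 3)` both lie on the boundary of the square `[-1,1]²`, i.e. on the unit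
sphere of the sup norm on `ℝ × ℝ`. So `Dav(T)` is a product of two such squares, and radial
projection identifies the boundary of the square with the Euclidean circle.
-/

open scoped Classical

noncomputable section

/-- A family of finsets of `V` is an abstract simplicial complex on the vertex set `V`:
it contains the empty set and all singletons, and is closed under taking subsets. -/
def IsComplex {V : Type*} (F : Set (Finset V)) : Prop :=
  ∅ ∈ F ∧ (∀ v : V, ({v} : Finset V) ∈ F) ∧ ∀ σ ∈ F, ∀ τ : Finset V, τ ⊆ σ → τ ∈ F

/-- The Davis complex of a family `F` of finsets of `V`: the subset of the cube
`[-1,1]^V ⊆ ℝ^V` of points `x` such that `{v | x v ≠ ±1}` is a member of `F`. -/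
def DavSet {V : Type*} (F : Set (Finset V)) : Set (V → ℝ) :=
  {x | (∀ v, x v ∈ Set.Icc (-1 : ℝ) 1) ∧ ∃ σ ∈ F, ∀ v, (x v ≠ -1 ∧ x v ≠ 1) ↔ v ∈ σ}

open Metric

section RadialProjection

variable {E F : Type*} [NormedAddCommGroup E] [NormedSpace ℝ E]
  [NormedAddCommGroup F] [NormedSpace ℝ F]

lemma inv_norm_smul_smul_of_pos (x : E) {c : ℝ} (hc : 0 < c) :
    ‖c • x‖⁻¹ • c • x = ‖x‖⁻¹ • x := by
  rw [norm_smul, Real.norm_of_nonneg hc.le, smul_smul, mul_inv, mul_right_comm,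
    inv_mul_cancel₀ hc.ne', one_mul]

def radialProjection (L : E ≃L[ℝ] F) (x : sphere (0 : E) 1) : sphere (0 : F) 1 :=
  ⟨‖L x‖⁻¹ • L x, mem_sphere_zero_iff_norm.2 <|
    norm_smul_inv_norm <| L.map_ne_zero_iff.2 (ne_zero_of_mem_unit_sphere x)⟩

lemma continuous_radialProjection (L : E ≃L[ℝ] F) : Continuous (radialProjection L) := by
  have hL : Continuous fun x : sphere (0 : E) 1 => L x := by fun_prop
  refine Continuous.subtype_mk ((hL.norm.inv₀ fun x => ?_).smul hL) _
  exact norm_ne_zero_iff.2 <| L.map_ne_zero_iff.2 (ne_zero_of_mem_unit_sphere x)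

lemma radialProjection_symm_radialProjection (L : E ≃L[ℝ] F) (x : sphere (0 : E) 1) :
    radialProjection L.symm (radialProjection L x) = x := by
  have hc : 0 < ‖L x‖⁻¹ :=
    inv_pos.2 <| norm_pos_iff.2 <| L.map_ne_zero_iff.2 (ne_zero_of_mem_unit_sphere x)
  ext1
  simp only [radialProjection, map_smul, ContinuousLinearEquiv.symm_apply_apply]
  rw [inv_norm_smul_smul_of_pos _ hc, norm_eq_of_mem_sphere x, inv_one, one_smul]

def sphereHomeomorph (L : E ≃L[ℝ] F) : sphere (0 : E) 1 ≃ₜ sphere (0 : F) 1 where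
  toFun := radialProjection L
  invFun := radialProjection L.symm
  left_inv := radialProjection_symm_radialProjection L
  right_inv y := by simpa using radialProjection_symm_radialProjection L.symm y
  continuous_toFun := continuous_radialProjection L
  continuous_invFun := continuous_radialProjection L.symm

end RadialProjection

lemma mem_davSet_iff {V : Type*} [Fintype V] (F : Set (Finset V)) (x : V → ℝ) :
    x ∈ DavSet F ↔ (∀ v, |x v| ≤ 1) ∧ Finset.univ.filter (fun v => |x v| < 1) ∈ F := by
  have interior_iff : ∀ t : ℝ, |t| ≤ 1 → ((t ≠ -1 ∧ t ≠ 1) ↔ |t| < 1) := fun t ht => by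
    rw [abs_le] at ht
    rw [abs_lt]
    exact ⟨fun h => ⟨ht.1.lt_of_ne' h.1, ht.2.lt_of_ne h.2⟩, fun h => ⟨h.1.ne', h.2.ne⟩⟩
  simp only [DavSet, Set.mem_ofPred_eq, Set.mem_Icc, ← abs_le]
  refine and_congr_right fun hx => ⟨?_, fun hσ => ⟨_, hσ, fun v => ?_⟩⟩
  · rintro ⟨σ, hσ, hσx⟩
    convert hσ
    ext v
    simp [← hσx, interior_iff _ (hx v)]
  · simp [interior_iff _ (hx v)]

lemma mem_fourCycle_iff (σ : Finset (Fin 4)) :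
    σ ∈ ({∅, {0}, {1}, {2}, {3}, ({0, 1} : Finset (Fin 4)), {1, 2}, {2, 3}, {3, 0}} :
      Set (Finset (Fin 4))) ↔ ¬(0 ∈ σ ∧ 2 ∈ σ) ∧ ¬(1 ∈ σ ∧ 3 ∈ σ) := by
  simp only [Set.mem_insert_iff, Set.mem_singleton_iff]
  revert σ
  decide

lemma mem_sphere_prod_iff (a b : ℝ) :
    (a, b) ∈ sphere (0 : ℝ × ℝ) 1 ↔ |a| ≤ 1 ∧ |b| ≤ 1 ∧ ¬(|a| < 1 ∧ |b| < 1) := by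
  rw [mem_sphere_zero_iff_norm, Prod.norm_def, Real.norm_eq_abs, Real.norm_eq_abs,
    le_antisymm_iff, max_le_iff, le_max_iff, not_and_or, not_lt, not_lt]
  tauto

lemma mem_davSet_fourCycle_iff (x : Fin 4 → ℝ) :
    x ∈ DavSet ({∅, {0}, {1}, {2}, {3}, ({0, 1} : Finset (Fin 4)), {1, 2}, {2, 3}, {3, 0}}) ↔
      (x 0, x 2) ∈ sphere (0 : ℝ × ℝ) 1 ∧ (x 1, x 3) ∈ sphere (0 : ℝ × ℝ) 1 := by
  simp only [mem_davSet_iff, mem_fourCycle_iff, mem_sphere_prod_iff, Fin.forall_fin_succ,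
    Finset.mem_filter, Finset.mem_univ, true_and, IsEmpty.forall_iff, and_true]
  tauto

def homeomorphNonEdges : (Fin 4 → ℝ) ≃ₜ (ℝ × ℝ) × (ℝ × ℝ) where
  toFun x := ((x 0, x 2), (x 1, x 3))
  invFun p := ![p.1.1, p.2.1, p.1.2, p.2.2]
  left_inv x := by funext v; fin_cases v <;> rfl
  right_inv p := rfl
  continuous_toFun := by fun_prop
  continuous_invFun := by
    refine continuous_pi fun i => ?_
    fin_cases i <;> simp <;> fun_prop

/-- Let `T` be the 4-cycle on vertices `{0,1,2,3}`, with maximal simplices the edges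
`{0,1}, {1,2}, {2,3}, {3,0}`. Then the Davis complex `Dav(T) ⊆ ℝ⁴` is homeomorphic to the
2-dimensional torus `S¹ × S¹`. -/
theorem davis_square_torus (F : Set (Finset (Fin 4)))
    (hF : F = {∅, {0}, {1}, {2}, {3}, ({0, 1} : Finset (Fin 4)), {1, 2}, {2, 3}, {3, 0}}) :
    Nonempty (↥(DavSet F) ≃ₜ
      ↥(Metric.sphere (0 : EuclideanSpace ℝ (Fin 2)) 1) ×
        ↥(Metric.sphere (0 : EuclideanSpace ℝ (Fin 2)) 1)) := by
  subst hF
  let S := sphere (0 : ℝ × ℝ) 1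
  let circle : S ≃ₜ sphere (0 : EuclideanSpace ℝ (Fin 2)) 1 :=
    sphereHomeomorph ((EuclideanSpace.equiv (Fin 2) ℝ).trans
      (ContinuousLinearEquiv.finTwoArrow ℝ ℝ)).symm
  exact ⟨(homeomorphNonEdges.subtype (q := (· ∈ S ×ˢ S)) mem_davSet_fourCycle_iff).trans
    ((Homeomorph.Set.prod S S).trans (circle.prodCongr circle))⟩
end
end

section
/- Let T be a finite simplicial complex on vertex set V and let S ⊆ T be a full subcomplex with vertex set W ⊆ V (full means: every simplex of T all of whose vertices lie in W belongs to S). For each function ε : V∖W → {-1,+1}, let C_ε = {x ∈ Dav(T) : x_v = ε(v) for every v ∈ V∖W}. Then the 2^(|V|-|W|) sets C_ε are pairwise disjoint, and for each ε the restriction map x ↦ x|_W is a homeomorphism from C_ε onto Dav(S) ⊆ [-1,1]^W. -/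
open scoped Classical

noncomputable section

/-!
Fixing the coordinates outside `W` to signs `ε` forces every free coordinate of a point of
`Dav(T)` into `W`; by fullness its free set is then a simplex of `S`, so restriction to `W`
lands in `Dav(S)`. Conversely, extending a point of `Dav(S)` by `ε` keeps its free set, which
is a simplex of `T` because `S ⊆ T`. Restriction and extension by `ε` are continuous and
mutually inverse, and slices with different `ε` are disjoint since they disagree off `W`.
-/

section ExtendSubtype

variable {V X : Type*} {W : Set V} {ε : V → X} {y : W → X} {v : V}

lemma extend_subtype_val_of_mem (hv : v ∈ W) :
    Function.extend ((↑) : W → V) y ε v = y ⟨v, hv⟩ :=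
  Subtype.val_injective.extend_apply y ε ⟨v, hv⟩

lemma extend_subtype_val_of_notMem (hv : v ∉ W) :
    Function.extend ((↑) : W → V) y ε v = ε v :=
  Function.extend_apply' y ε v fun ⟨w, hw⟩ => hv (hw ▸ w.2)

lemma continuous_extend_subtype_val [TopologicalSpace X] (ε : V → X) :
    Continuous fun y : W → X => Function.extend ((↑) : W → V) y ε := by
  refine continuous_pi fun v => ?_
  by_cases hv : v ∈ W
  · simpa only [extend_subtype_val_of_mem hv] using continuous_apply (⟨v, hv⟩ : W)
  · simpa only [extend_subtype_val_of_notMem hv] using continuous_const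

def Homeomorph.sliceDomRestrict [TopologicalSpace X] (s : Set (V → X)) (t : Set (W → X))
    (ε : V → X) (hres : ∀ x ∈ s, (∀ v ∉ W, x v = ε v) → W.domRestrict x ∈ t)
    (hext : ∀ y ∈ t, Function.extend ((↑) : W → V) y ε ∈ s) :
    {x ∈ s | ∀ v ∉ W, x v = ε v} ≃ₜ t where
  toFun x := ⟨W.domRestrict x.1, hres x.1 x.2.1 x.2.2⟩
  invFun y := ⟨Function.extend (↑) y.1 ε, hext y.1 y.2,
    fun _ hv => extend_subtype_val_of_notMem hv⟩
  left_inv := by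
    rintro ⟨x, -, hxε⟩
    ext v
    by_cases hv : v ∈ W
    · exact extend_subtype_val_of_mem hv
    · exact (extend_subtype_val_of_notMem hv).trans (hxε v hv).symm
  right_inv := by
    rintro ⟨y, -⟩
    ext w
    exact extend_subtype_val_of_mem w.2
  continuous_toFun :=
    ((Pi.continuous_domRestrict W).comp continuous_subtype_val).subtype_mk _
  continuous_invFun :=
    ((continuous_extend_subtype_val ε).comp continuous_subtype_val).subtype_mk _

end ExtendSubtype

section Davis

variable {V : Type*} {W : Set V} {F : Set (Finset V)} {FS : Set (Finset W)} {ε : V → ℝ}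

lemma domRestrict_mem_davSet
    (hfull : ∀ σ ∈ F, ↑σ ⊆ W → ∃ τ ∈ FS, τ.map (Function.Embedding.subtype _) = σ)
    (hε : ∀ v ∉ W, ε v = -1 ∨ ε v = 1) {x : V → ℝ} (hx : x ∈ DavSet F)
    (hxε : ∀ v ∉ W, x v = ε v) : W.domRestrict x ∈ DavSet FS := by
  obtain ⟨hIcc, σ, hσF, hσ⟩ := hx
  have hσW : ↑σ ⊆ W := by
    intro v hvσ
    by_contra hvW
    have hfree := (hσ v).2 hvσ
    rw [hxε v hvW] at hfree
    rcases hε v hvW with h | h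
    exacts [hfree.1 h, hfree.2 h]
  obtain ⟨τ, hτFS, rfl⟩ := hfull σ hσF hσW
  exact ⟨fun w => hIcc w, τ, hτFS, fun w => (hσ w).trans (Finset.mem_map' _)⟩

lemma extend_subtype_val_mem_davSet
    (hsub : ∀ σ ∈ FS, σ.map (Function.Embedding.subtype _) ∈ F)
    (hε : ∀ v ∉ W, ε v = -1 ∨ ε v = 1) {y : W → ℝ} (hy : y ∈ DavSet FS) :
    Function.extend ((↑) : W → V) y ε ∈ DavSet F := by
  obtain ⟨hIcc, τ, hτFS, hτ⟩ := hy
  refine ⟨fun v => ?_, τ.map (Function.Embedding.subtype _), hsub τ hτFS, fun v => ?_⟩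
  all_goals by_cases hv : v ∈ W
  · rw [extend_subtype_val_of_mem hv]
    exact hIcc _
  · rw [extend_subtype_val_of_notMem hv]
    rcases hε v hv with h | h <;> norm_num [h]
  · rw [extend_subtype_val_of_mem hv, hτ]
    simp [hv]
  · rw [extend_subtype_val_of_notMem hv]
    rcases hε v hv with h | h <;> simp [h, hv]

end Davis

theorem davis_full_subcomplex_slices_general {V : Type}
    (F : Set (Finset V))
    (W : Set V) (FS : Set (Finset ↥W))
    (hsub : ∀ σ ∈ FS, σ.map (Function.Embedding.subtype _) ∈ F)
    (hfull : ∀ σ ∈ F, ↑σ ⊆ W → ∃ τ ∈ FS, τ.map (Function.Embedding.subtype _) = σ) :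
    (∀ ε₁ ε₂ : V → ℝ,
        (∀ v ∉ W, ε₁ v = -1 ∨ ε₁ v = 1) → (∀ v ∉ W, ε₂ v = -1 ∨ ε₂ v = 1) →
        (∃ v ∉ W, ε₁ v ≠ ε₂ v) →
        Disjoint {x ∈ DavSet F | ∀ v ∉ W, x v = ε₁ v}
          {x ∈ DavSet F | ∀ v ∉ W, x v = ε₂ v}) ∧
      ∀ ε : V → ℝ, (∀ v ∉ W, ε v = -1 ∨ ε v = 1) →
        ∃ h : ↥{x ∈ DavSet F | ∀ v ∉ W, x v = ε v} ≃ₜ ↥(DavSet FS),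
          ∀ x, ∀ w : ↥W, (h x : ↥W → ℝ) w = (x : V → ℝ) ↑w := by
  refine ⟨?_, fun ε hε => ?_⟩
  · rintro ε₁ ε₂ - - ⟨v, hv, hne⟩
    refine Set.disjoint_left.2 fun x hx₁ hx₂ => hne ?_
    exact (hx₁.2 v hv).symm.trans (hx₂.2 v hv)
  · refine ⟨Homeomorph.sliceDomRestrict (DavSet F) (DavSet FS) ε
      (fun x hx hxε => domRestrict_mem_davSet hfull hε hx hxε)
      (fun y hy => extend_subtype_val_mem_davSet hsub hε hy), fun x w => rfl⟩

/-- Let `S` (with faces `FS`, on the vertex set `W ⊆ V`) be a full subcomplex of `T`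
(with faces `F`, on `V`). For a sign assignment `ε` on `V∖W`, the slices
`C_ε = {x ∈ Dav(T) | x v = ε v for all v ∉ W}` are pairwise disjoint, and for each `ε` the
coordinate-restriction map `x ↦ x|_W` is a homeomorphism from `C_ε` onto `Dav(S)`. -/
theorem davis_full_subcomplex_slices {V : Type} [Fintype V]
    (F : Set (Finset V)) (hF : IsComplex F)
    (W : Set V) (FS : Set (Finset ↥W)) (hS : IsComplex FS)
    (hsub : ∀ σ ∈ FS, σ.map (Function.Embedding.subtype _) ∈ F)
    (hfull : ∀ σ ∈ F, ↑σ ⊆ W → ∃ τ ∈ FS, τ.map (Function.Embedding.subtype _) = σ) :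
    (∀ ε₁ ε₂ : V → ℝ,
        (∀ v ∉ W, ε₁ v = -1 ∨ ε₁ v = 1) → (∀ v ∉ W, ε₂ v = -1 ∨ ε₂ v = 1) →
        (∃ v ∉ W, ε₁ v ≠ ε₂ v) →
        Disjoint {x ∈ DavSet F | ∀ v ∉ W, x v = ε₁ v}
          {x ∈ DavSet F | ∀ v ∉ W, x v = ε₂ v}) ∧
      ∀ ε : V → ℝ, (∀ v ∉ W, ε v = -1 ∨ ε v = 1) →
        ∃ h : ↥{x ∈ DavSet F | ∀ v ∉ W, x v = ε v} ≃ₜ ↥(DavSet FS),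
          ∀ x, ∀ w : ↥W, (h x : ↥W → ℝ) w = (x : V → ℝ) ↑w :=
  davis_full_subcomplex_slices_general F W FS hsub hfull
end
end

section
/- Let T be a finite flag simplicial complex on vertex set V and let v ∈ V be a vertex. Then the double T_v of T at v is a flag simplicial complex. -/
/-! A vertex set of `T_v` is a face exactly when it lies in a single copy of the antistar of `v`
and folds onto a face of `T`; closure under subsets is then inherited from `T`. For flagness,
two vertices off the link of `v` that span an edge of `T_v` lie in the same copy, so a pairwise
adjacent vertex set lies in one copy, and its fold is pairwise adjacent in `T`, hence a face. -/

open scoped Classical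

noncomputable section

/-- `f₀`: the number of vertices (`0`-simplices) of a family of finsets. -/
def fZero {V : Type*} (F : Set (Finset V)) : ℕ := {σ ∈ F | σ.card = 1}.ncard

/-- `f₁`: the number of edges (`1`-simplices) of a family of finsets. -/
def fOne {V : Type*} (F : Set (Finset V)) : ℕ := {σ ∈ F | σ.card = 2}.ncard

/-- `γ₂(T) = 16 - 5·f₀(T) + f₁(T)`, as an integer. -/
def gammaTwo {V : Type*} (F : Set (Finset V)) : ℤ := 16 - 5 * (fZero F : ℤ) + (fOne F : ℤ)

/-- `T` is a flag simplicial complex: every set of vertices that are pairwise joined by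
`1`-simplices of `T` is itself a simplex of `T`. -/
def IsFlag {V : Type*} (F : Set (Finset V)) : Prop :=
  ∀ σ : Finset V, (∀ u ∈ σ, ({u} : Finset V) ∈ F) →
    (∀ u ∈ σ, ∀ w ∈ σ, u ≠ w → ({u, w} : Finset V) ∈ F) → σ ∈ F

/-- The set of neighbours of the vertex `v` (the vertex set of the link of `v`). -/
def nbrs {V : Type*} [DecidableEq V] (F : Set (Finset V)) (v : V) : Set V :=
  {u | u ≠ v ∧ ({u, v} : Finset V) ∈ F}

/-- The vertex set of the double of a complex `F` at a vertex `v`: the neighbours of `v`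
appear once (with tag `true`), while all other vertices distinct from `v` appear in two
copies, tagged by a Boolean. -/
def DblVtx {V : Type*} [DecidableEq V] (F : Set (Finset V)) (v : V) : Type _ :=
  {p : V × Bool // p.1 ≠ v ∧ (p.1 ∈ nbrs F v → p.2 = true)}

/-- The copy-`i` inclusion of a vertex `u ≠ v` of the antistar of `v` into the double:
it fixes the neighbours of `v` and sends every other vertex to its copy `i`. -/
def inclVtx {V : Type*} [DecidableEq V] (F : Set (Finset V)) (v : V) (i : Bool)
    (u : V) (hu : u ≠ v) : DblVtx F v :=
  ⟨(u, if u ∈ nbrs F v then true else i), hu, fun h => if_pos h⟩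

/-- The copy-`i` image in the double of a simplex `σ` of the antistar of `v`. -/
def inclFace {V : Type*} [DecidableEq V] (F : Set (Finset V)) (v : V) (i : Bool)
    (σ : Finset V) (hσ : v ∉ σ) : Finset (DblVtx F v) :=
  σ.attach.image fun u => inclVtx F v i u.1 (fun h => hσ (h ▸ u.2))

/-- The faces of the double `T_v` of `T` at `v`: the images of the simplices of the antistar
of `v` under the two copy inclusions. -/
def doubleFaces {V : Type*} [DecidableEq V] (F : Set (Finset V)) (v : V) :
    Set (Finset (DblVtx F v)) :=
  {ρ | ∃ (i : Bool) (σ : Finset V) (_ : σ ∈ F) (hv : v ∉ σ), ρ = inclFace F v i σ hv}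

namespace DblVtx

variable {V : Type*} [DecidableEq V] {F : Set (Finset V)} {v : V}

/-- The folding map `T_v → T` identifying the two copies of the antistar of `v`. -/
def fold (p : DblVtx F v) : V := p.1.1

/-- The copy of the antistar containing `p`; it is `true` on the link of `v`. -/
def tag (p : DblVtx F v) : Bool := p.1.2

lemma fold_ne (p : DblVtx F v) : p.fold ≠ v := p.2.1

lemma tag_of_fold_mem_nbrs (p : DblVtx F v) : p.fold ∈ nbrs F v → p.tag = true := p.2.2

lemma ext_fold_tag {p q : DblVtx F v} (h₁ : p.fold = q.fold) (h₂ : p.tag = q.tag) : p = q :=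
  Subtype.ext (Prod.ext h₁ h₂)

lemma inclVtx_eq_iff {i : Bool} {u : V} {hu : u ≠ v} {p : DblVtx F v} :
    inclVtx F v i u hu = p ↔ p.fold = u ∧ (u ∉ nbrs F v → p.tag = i) := by
  constructor
  · rintro rfl
    exact ⟨rfl, fun hn => if_neg hn⟩
  · rintro ⟨rfl, h⟩
    refine ext_fold_tag rfl ?_
    change (if p.fold ∈ nbrs F v then true else i) = p.tag
    split_ifs with hn
    · exact (p.tag_of_fold_mem_nbrs hn).symm
    · exact (h hn).symm

end DblVtx

open DblVtx

section

variable {V : Type*} [DecidableEq V] {F : Set (Finset V)} {v : V}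

lemma mem_inclFace {i : Bool} {σ : Finset V} {hσ : v ∉ σ} {p : DblVtx F v} :
    p ∈ inclFace F v i σ hσ ↔ p.fold ∈ σ ∧ (p.fold ∉ nbrs F v → p.tag = i) := by
  simp only [inclFace, Finset.mem_image, Finset.mem_attach, true_and, inclVtx_eq_iff]
  constructor
  · rintro ⟨u, hu, h⟩
    exact ⟨hu ▸ u.2, hu ▸ h⟩
  · rintro ⟨hp, h⟩
    exact ⟨⟨p.fold, hp⟩, rfl, h⟩

lemma image_fold_inclFace (i : Bool) (σ : Finset V) (hσ : v ∉ σ) :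
    (inclFace F v i σ hσ).image fold = σ := by
  ext u
  simp only [Finset.mem_image]
  constructor
  · rintro ⟨p, hp, rfl⟩
    exact (mem_inclFace.mp hp).1
  · intro hu
    have hu' : u ≠ v := ne_of_mem_of_not_mem hu hσ
    exact ⟨inclVtx F v i u hu', mem_inclFace.mpr ⟨hu, (inclVtx_eq_iff.mp rfl).2⟩, rfl⟩

lemma notMem_image_fold (S : Finset (DblVtx F v)) : v ∉ S.image fold := by
  simp only [Finset.mem_image, not_exists, not_and]
  exact fun p _ => p.fold_ne

lemma inclFace_image_fold {S : Finset (DblVtx F v)} {i : Bool}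
    (hS : ∀ p ∈ S, p.fold ∉ nbrs F v → p.tag = i) :
    inclFace F v i (S.image fold) (notMem_image_fold S) = S := by
  ext p
  rw [mem_inclFace, Finset.mem_image]
  constructor
  · rintro ⟨⟨q, hq, hqp⟩, h⟩
    suffices q = p from this ▸ hq
    refine ext_fold_tag hqp ?_
    by_cases hn : p.fold ∈ nbrs F v
    · rw [p.tag_of_fold_mem_nbrs hn, q.tag_of_fold_mem_nbrs (by rwa [hqp])]
    · rw [h hn, hS q hq (by rwa [hqp])]
  · exact fun hp => ⟨⟨p, hp, rfl⟩, hS p hp⟩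

lemma mem_doubleFaces_iff {ρ : Finset (DblVtx F v)} :
    ρ ∈ doubleFaces F v ↔
      ∃ i : Bool, (∀ p ∈ ρ, p.fold ∉ nbrs F v → p.tag = i) ∧ ρ.image fold ∈ F := by
  constructor
  · rintro ⟨i, σ, hσF, hσ, rfl⟩
    exact ⟨i, fun p hp => (mem_inclFace.mp hp).2, by rwa [image_fold_inclFace]⟩
  · rintro ⟨i, hρ, hF⟩
    exact ⟨i, _, hF, notMem_image_fold ρ, (inclFace_image_fold hρ).symm⟩

lemma isComplex_doubleFaces (hF : IsComplex F) : IsComplex (doubleFaces F v) := by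
  refine ⟨mem_doubleFaces_iff.mpr ⟨true, by simp, by simpa using hF.1⟩, fun p => ?_, ?_⟩
  · exact mem_doubleFaces_iff.mpr ⟨p.tag, by simp, by simpa using hF.2.1 p.fold⟩
  · intro ρ hρ τ hτ
    obtain ⟨i, hi, hρF⟩ := mem_doubleFaces_iff.mp hρ
    exact mem_doubleFaces_iff.mpr
      ⟨i, fun p hp => hi p (hτ hp), hF.2.2 _ hρF _ (Finset.image_subset_image hτ)⟩

lemma fold_pair_mem_of_mem_doubleFaces {p q : DblVtx F v} (h : {p, q} ∈ doubleFaces F v) :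
    {p.fold, q.fold} ∈ F := by
  obtain ⟨-, -, hF⟩ := mem_doubleFaces_iff.mp h
  simpa [Finset.image_insert] using hF

lemma tag_eq_of_pair_mem_doubleFaces {p q : DblVtx F v} (h : {p, q} ∈ doubleFaces F v)
    (hp : p.fold ∉ nbrs F v) (hq : q.fold ∉ nbrs F v) : p.tag = q.tag := by
  obtain ⟨i, hi, -⟩ := mem_doubleFaces_iff.mp h
  rw [hi p (by simp) hp, hi q (by simp) hq]

lemma isFlag_doubleFaces (hF : IsComplex F) (hflag : IsFlag F) : IsFlag (doubleFaces F v) := by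
  intro S _ hS
  have hcopy : ∃ i : Bool, ∀ p ∈ S, p.fold ∉ nbrs F v → p.tag = i := by
    by_cases hlink : ∀ p ∈ S, p.fold ∈ nbrs F v
    · exact ⟨true, fun p hp hn => absurd (hlink p hp) hn⟩
    obtain ⟨p₀, hp₀, hn₀⟩ := not_forall₂.mp hlink
    refine ⟨p₀.tag, fun p hp hn => ?_⟩
    rcases eq_or_ne p p₀ with rfl | hne
    · rfl
    · exact tag_eq_of_pair_mem_doubleFaces (hS p hp p₀ hp₀ hne) hn hn₀
  obtain ⟨i, hi⟩ := hcopy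
  refine mem_doubleFaces_iff.mpr ⟨i, hi, hflag _ (fun u _ => hF.2.1 u) ?_⟩
  simp only [Finset.mem_image]
  rintro _ ⟨p, hp, rfl⟩ _ ⟨q, hq, rfl⟩ hne
  -- `IsFlag` builds `{u, w}` with classical decidable equality
  convert fold_pair_mem_of_mem_doubleFaces (hS p hp q hq (fun h => hne (h ▸ rfl)))

end

theorem double_isFlag_general {V : Type} [DecidableEq V]
    (F : Set (Finset V)) (hF : IsComplex F) (hflag : IsFlag F) (v : V) :
    IsComplex (doubleFaces F v) ∧ IsFlag (doubleFaces F v) :=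
  ⟨isComplex_doubleFaces hF, isFlag_doubleFaces hF hflag⟩

/-- The double `T_v` of a finite flag simplicial complex `T` at a vertex `v` is a flag
simplicial complex. -/
theorem double_isFlag {V : Type} [Fintype V] [DecidableEq V]
    (F : Set (Finset V)) (hF : IsComplex F) (hflag : IsFlag F) (v : V) :
    IsComplex (doubleFaces F v) ∧ IsFlag (doubleFaces F v) :=
  double_isFlag_general F hF hflag v
end
end

section
/- Let T be a finite flag simplicial complex on vertex set V, let v ∈ V, and let T_v be the double of T at v. If every 1-simplex of T is contained in a square of T, then every 1-simplex of T_v is contained in a square of T_v. -/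
/-!
Every edge of `T_v` is the copy of an edge `xy` of `T` in one of the two sheets. Take a square
`x y c d` of `T`. If it avoids `v`, its copy in the same sheet is a square of `T_v`. Otherwise
`v` is opposite to `x` or to `y`, say the square is `x y v d`. Then `y` and `d` lie in the link
of `v`, so they are shared by both sheets, while `x` does not, so its two copies `x, x'` are
distinct and not joined; hence `x y x' d` is a square of `T_v`.
-/

open scoped Classical

noncomputable section

/-- `a, b, c, d` form a square in `F`: four distinct vertices with consecutive pairs joined
by `1`-simplices and the two diagonals not simplices (a full subcomplex isomorphic to a
`4`-cycle). -/
def IsSquareIn {V : Type*} [DecidableEq V] (F : Set (Finset V)) (a b c d : V) : Prop :=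
  a ≠ b ∧ a ≠ c ∧ a ≠ d ∧ b ≠ c ∧ b ≠ d ∧ c ≠ d ∧
    ({a, b} : Finset V) ∈ F ∧ ({b, c} : Finset V) ∈ F ∧ ({c, d} : Finset V) ∈ F ∧
    ({d, a} : Finset V) ∈ F ∧ ({a, c} : Finset V) ∉ F ∧ ({b, d} : Finset V) ∉ F

/-- The `1`-simplex `{x, y}` is contained in a square of `F`. -/
def EdgeInSquare {V : Type*} [DecidableEq V] (F : Set (Finset V)) (x y : V) : Prop :=
  ∃ c d, IsSquareIn F x y c d

section Squares

variable {V : Type*} [DecidableEq V] {F : Set (Finset V)} {a b c d : V}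

theorem IsSquareIn.swap (h : IsSquareIn F a b c d) : IsSquareIn F b a d c := by
  obtain ⟨hab, hac, had, hbc, hbd, hcd, eab, ebc, ecd, eda, nac, nbd⟩ := h
  rw [Finset.pair_comm] at eab ebc ecd eda
  exact ⟨hab.symm, hbd, hbc, had, hac, hcd.symm, eab, eda, ecd, ebc, nbd, nac⟩

theorem EdgeInSquare.symm (h : EdgeInSquare F a b) : EdgeInSquare F b a :=
  let ⟨c, d, hsq⟩ := h
  ⟨d, c, hsq.swap⟩

end Squares

section Double

variable {V : Type*} [DecidableEq V] {F : Set (Finset V)} {v : V}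

theorem inclVtx_ne_inclVtx_of_ne {i j : Bool} {a b : V} {ha : a ≠ v} {hb : b ≠ v}
    (h : a ≠ b) : inclVtx F v i a ha ≠ inclVtx F v j b hb :=
  fun e => h (congrArg (fun p => p.1.1) e)

theorem inclVtx_eq_inclVtx_of_mem_nbrs (i j : Bool) {u : V} {hu : u ≠ v}
    (h : u ∈ nbrs F v) : inclVtx F v i u hu = inclVtx F v j u hu :=
  Subtype.ext (by simp [inclVtx, if_pos h])

theorem inclVtx_ne_inclVtx_not_of_notMem_nbrs {i : Bool} {u : V} {hu : u ≠ v}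
    (h : u ∉ nbrs F v) : inclVtx F v i u hu ≠ inclVtx F v (!i) u hu := by
  intro e
  simpa [inclVtx, if_neg h] using congrArg (fun p => p.1.2) e

theorem inclFace_pair (i : Bool) {a b : V} (h : v ∉ ({a, b} : Finset V))
    (ha : a ≠ v) (hb : b ≠ v) :
    inclFace F v i {a, b} h = {inclVtx F v i a ha, inclVtx F v i b hb} := by
  ext x
  simp only [inclFace, Finset.mem_image, Finset.mem_attach, true_and, Subtype.exists,
    Finset.mem_insert, Finset.mem_singleton]
  constructor
  · rintro ⟨u, rfl | rfl, rfl⟩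
    exacts [Or.inl rfl, Or.inr rfl]
  · rintro (rfl | rfl)
    exacts [⟨a, Or.inl rfl, rfl⟩, ⟨b, Or.inr rfl, rfl⟩]

theorem exists_inclVtx_of_mem_inclFace {i : Bool} {σ : Finset V} {hσ : v ∉ σ}
    {p : DblVtx F v} (hp : p ∈ inclFace F v i σ hσ) :
    ∃ (u : V) (hu : u ≠ v), u ∈ σ ∧ p = inclVtx F v i u hu := by
  obtain ⟨⟨u, hu⟩, -, rfl⟩ := Finset.mem_image.mp hp
  exact ⟨u, _, hu, rfl⟩

theorem image_fst_inclFace (i : Bool) (σ : Finset V) (hσ : v ∉ σ) :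
    (inclFace F v i σ hσ).image (fun p => p.1.1) = σ := by
  ext u
  simp only [inclFace, Finset.image_image, Finset.mem_image, Finset.mem_attach, true_and,
    Subtype.exists]
  exact ⟨fun ⟨w, hw, hwu⟩ => hwu ▸ hw, fun hu => ⟨u, hu, rfl⟩⟩

theorem card_inclFace (i : Bool) (σ : Finset V) (hσ : v ∉ σ) :
    (inclFace F v i σ hσ).card = σ.card := by
  rw [inclFace, Finset.card_image_of_injective _ (fun a b h => Subtype.ext
    (congrArg (fun p : DblVtx F v => p.1.1) h)), Finset.card_attach]

theorem pair_inclVtx_mem_doubleFaces {a b : V} (hab : ({a, b} : Finset V) ∈ F) (i : Bool)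
    (ha : a ≠ v) (hb : b ≠ v) :
    ({inclVtx F v i a ha, inclVtx F v i b hb} : Finset (DblVtx F v)) ∈ doubleFaces F v := by
  have hv : v ∉ ({a, b} : Finset V) := by
    simp only [Finset.mem_insert, Finset.mem_singleton, not_or]
    exact ⟨ha.symm, hb.symm⟩
  exact ⟨i, {a, b}, hab, hv, (inclFace_pair i hv ha hb).symm⟩

theorem pair_notMem_doubleFaces {p q : DblVtx F v} (h : ({p.1.1, q.1.1} : Finset V) ∉ F) :
    ({p, q} : Finset (DblVtx F v)) ∉ doubleFaces F v := by
  rintro ⟨i, σ, hσF, hσv, heq⟩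
  have hσ : ({p, q} : Finset (DblVtx F v)).image (fun p => p.1.1) = σ := by
    rw [heq, image_fst_inclFace]
  rw [Finset.image_insert, Finset.image_singleton] at hσ
  exact h (hσ ▸ hσF)

theorem pair_notMem_doubleFaces_of_fst_eq {p q : DblVtx F v} (hpq : p ≠ q)
    (h : p.1.1 = q.1.1) : ({p, q} : Finset (DblVtx F v)) ∉ doubleFaces F v := by
  rintro ⟨i, σ, -, hσv, heq⟩
  obtain ⟨a, ha, -, rfl⟩ := exists_inclVtx_of_mem_inclFace (heq ▸ Finset.mem_insert_self p {q})
  obtain ⟨b, hb, -, rfl⟩ :=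
    exists_inclVtx_of_mem_inclFace (heq ▸ Finset.mem_insert_of_mem (Finset.mem_singleton_self q))
  obtain rfl : a = b := h
  exact hpq rfl

theorem exists_inclVtx_of_pair_mem_doubleFaces {p q : DblVtx F v} (hpq : p ≠ q)
    (h : ({p, q} : Finset (DblVtx F v)) ∈ doubleFaces F v) :
    ∃ (i : Bool) (x y : V) (hx : x ≠ v) (hy : y ≠ v), ({x, y} : Finset V) ∈ F ∧
      p = inclVtx F v i x hx ∧ q = inclVtx F v i y hy := by
  obtain ⟨i, σ, hσF, hσv, heq⟩ := h
  obtain ⟨x, hx, hxσ, rfl⟩ := exists_inclVtx_of_mem_inclFace (heq ▸ Finset.mem_insert_self p {q})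
  obtain ⟨y, hy, hyσ, rfl⟩ :=
    exists_inclVtx_of_mem_inclFace (heq ▸ Finset.mem_insert_of_mem (Finset.mem_singleton_self q))
  have hxy : x ≠ y := by
    rintro rfl
    exact hpq rfl
  have hσ : ({x, y} : Finset V) = σ := by
    refine Finset.eq_of_subset_of_card_le (Finset.insert_subset hxσ
      (Finset.singleton_subset_iff.mpr hyσ)) ?_
    rw [← card_inclFace i σ hσv, ← heq, Finset.card_pair hpq, Finset.card_pair hxy]
  exact ⟨i, x, y, hx, hy, hσ ▸ hσF, rfl, rfl⟩

theorem IsSquareIn.map_inclVtx {a b c d : V} (h : IsSquareIn F a b c d) (i : Bool)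
    (ha : a ≠ v) (hb : b ≠ v) (hc : c ≠ v) (hd : d ≠ v) :
    IsSquareIn (doubleFaces F v) (inclVtx F v i a ha) (inclVtx F v i b hb)
      (inclVtx F v i c hc) (inclVtx F v i d hd) := by
  obtain ⟨hab, hac, had, hbc, hbd, hcd, eab, ebc, ecd, eda, nac, nbd⟩ := h
  exact ⟨inclVtx_ne_inclVtx_of_ne hab, inclVtx_ne_inclVtx_of_ne hac,
    inclVtx_ne_inclVtx_of_ne had, inclVtx_ne_inclVtx_of_ne hbc, inclVtx_ne_inclVtx_of_ne hbd,
    inclVtx_ne_inclVtx_of_ne hcd, pair_inclVtx_mem_doubleFaces eab i ha hb,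
    pair_inclVtx_mem_doubleFaces ebc i hb hc, pair_inclVtx_mem_doubleFaces ecd i hc hd,
    pair_inclVtx_mem_doubleFaces eda i hd ha, pair_notMem_doubleFaces nac,
    pair_notMem_doubleFaces nbd⟩

theorem IsSquareIn.edgeInSquare_inclVtx_of_third_eq {x y d : V} (h : IsSquareIn F x y v d)
    (i : Bool) (hx : x ≠ v) (hy : y ≠ v) :
    EdgeInSquare (doubleFaces F v) (inclVtx F v i x hx) (inclVtx F v i y hy) := by
  obtain ⟨hxy, -, hxd, -, hyd, hvd, exy, eyv, evd, edx, nxv, nyd⟩ := h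
  have hd : d ≠ v := hvd.symm
  have hy_nbr : y ∈ nbrs F v := ⟨hy, eyv⟩
  have hd_nbr : d ∈ nbrs F v := ⟨hd, by rwa [Finset.pair_comm]⟩
  have hx_nbr : x ∉ nbrs F v := fun hx_nbr => nxv hx_nbr.2
  have hxx' := inclVtx_ne_inclVtx_not_of_notMem_nbrs (i := i) (hu := hx) hx_nbr
  refine ⟨inclVtx F v (!i) x hx, inclVtx F v i d hd, inclVtx_ne_inclVtx_of_ne hxy, hxx',
    inclVtx_ne_inclVtx_of_ne hxd, inclVtx_ne_inclVtx_of_ne hxy.symm,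
    inclVtx_ne_inclVtx_of_ne hyd, inclVtx_ne_inclVtx_of_ne hxd,
    pair_inclVtx_mem_doubleFaces exy i hx hy, ?_, ?_,
    pair_inclVtx_mem_doubleFaces edx i hd hx, pair_notMem_doubleFaces_of_fst_eq hxx' rfl,
    pair_notMem_doubleFaces nyd⟩
  · rw [inclVtx_eq_inclVtx_of_mem_nbrs i (!i) hy_nbr]
    exact pair_inclVtx_mem_doubleFaces (by rwa [Finset.pair_comm]) (!i) hy hx
  · rw [inclVtx_eq_inclVtx_of_mem_nbrs i (!i) hd_nbr]
    exact pair_inclVtx_mem_doubleFaces (by rwa [Finset.pair_comm]) (!i) hx hd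

theorem EdgeInSquare.map_inclVtx {x y : V} (h : EdgeInSquare F x y) (i : Bool)
    (hx : x ≠ v) (hy : y ≠ v) :
    EdgeInSquare (doubleFaces F v) (inclVtx F v i x hx) (inclVtx F v i y hy) := by
  obtain ⟨c, d, hsq⟩ := h
  by_cases hc : c = v
  · subst hc
    exact hsq.edgeInSquare_inclVtx_of_third_eq i hx hy
  by_cases hd : d = v
  · subst hd
    exact (hsq.swap.edgeInSquare_inclVtx_of_third_eq i hy hx).symm
  exact ⟨_, _, hsq.map_inclVtx i hx hy hc hd⟩

end Double

theorem double_edges_in_squares_general {V : Type} [DecidableEq V]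
    (F : Set (Finset V)) (v : V)
    (hsq : ∀ x y : V, x ≠ y → ({x, y} : Finset V) ∈ F → EdgeInSquare F x y) :
    ∀ p q : DblVtx F v, p ≠ q → ({p, q} : Finset (DblVtx F v)) ∈ doubleFaces F v →
      EdgeInSquare (doubleFaces F v) p q := by
  intro p q hpq hmem
  obtain ⟨i, x, y, hx, hy, hxy, rfl, rfl⟩ := exists_inclVtx_of_pair_mem_doubleFaces hpq hmem
  have hne : x ≠ y := by
    rintro rfl
    exact hpq rfl
  exact (hsq x y hne hxy).map_inclVtx i hx hy

/-- If every `1`-simplex of a finite flag simplicial complex `T` is contained in a square of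
`T`, then every `1`-simplex of the double `T_v` is contained in a square of `T_v`. -/
theorem double_edges_in_squares {V : Type} [Fintype V] [DecidableEq V]
    (F : Set (Finset V)) (hF : IsComplex F) (hflag : IsFlag F) (v : V)
    (hsq : ∀ x y : V, x ≠ y → ({x, y} : Finset V) ∈ F → EdgeInSquare F x y) :
    ∀ p q : DblVtx F v, p ≠ q → ({p, q} : Finset (DblVtx F v)) ∈ doubleFaces F v →
      EdgeInSquare (doubleFaces F v) p q :=
  double_edges_in_squares_general F v hsq
end
end
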